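/- arXiv:1905.02412 — 5 statements merged into one kernel-verified Lean document; each statement's English description precedes it below -/
import Mathlib

section
/- Let A and B be n×n Hermitian matrices with eigenvalues γ_1 ≥ ⋯ ≥ γ_n and δ_1 ≥ ⋯ ≥ δ_n respectively. Then ∑_i γ_i δ_{n+1-i} ≤ tr(AB) ≤ ∑_i γ_i δ_i. -/
/-!
Diagonalise `A = U diag(a) U*` and `B = V diag(b) V*`. Then `Re tr(AB) = ∑ i j, a i b j |W i j|²`
with `W = U* V` unitary, so `(|W i j|²)` is doubly stochastic. By Birkhoff's theorem it is a
convex combination of permutation matrices, and for each permutation `π` the rearrangement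
inequality puts `∑ i, a i b (π i)` between the oppositely sorted and the similarly sorted pairing.
-/

open Finset Matrix

namespace Matrix

lemma submatrix_mem_doublyStochastic {ι κ R : Type*} [Fintype ι] [DecidableEq ι] [Fintype κ]
    [DecidableEq κ] [Semiring R] [PartialOrder R] [IsOrderedRing R] {S : Matrix ι ι R}
    (hS : S ∈ doublyStochastic R ι) (e₁ e₂ : κ ≃ ι) :
    S.submatrix e₁ e₂ ∈ doublyStochastic R κ := by
  rw [mem_doublyStochastic_iff_sum] at hS ⊢
  obtain ⟨hnonneg, hrow, hcol⟩ := hS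
  refine ⟨fun i j => hnonneg _ _, fun i => ?_, fun j => ?_⟩
  · simpa only [submatrix_apply] using (e₂.sum_comp (S (e₁ i))).trans (hrow _)
  · simpa only [submatrix_apply] using (e₁.sum_comp (S · (e₂ j))).trans (hcol _)

section Rearrangement

variable {ι R : Type*} [Fintype ι] [DecidableEq ι]
  [Field R] [LinearOrder R] [IsStrictOrderedRing R] {S : Matrix ι ι R} {f g : ι → R}

lemma exists_dotProduct_mulVec_eq_sum_perm (hS : S ∈ doublyStochastic R ι) (f g : ι → R) :
    ∃ w : Equiv.Perm ι → R, (∀ σ, 0 ≤ w σ) ∧ ∑ σ, w σ = 1 ∧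
      f ⬝ᵥ (S *ᵥ g) = ∑ σ, w σ * f ⬝ᵥ (g ∘ σ) := by
  obtain ⟨w, hw0, hw1, rfl⟩ := exists_eq_sum_perm_of_mem_doublyStochastic hS
  refine ⟨w, hw0, hw1, ?_⟩
  simp only [sum_mulVec, smul_mulVec, permMatrix_mulVec, dotProduct_sum, dotProduct_smul,
    smul_eq_mul]

lemma _root_.Monovary.dotProduct_mulVec_le (hS : S ∈ doublyStochastic R ι) (h : Monovary f g) :
    f ⬝ᵥ (S *ᵥ g) ≤ f ⬝ᵥ g := by
  obtain ⟨w, hw0, hw1, hS⟩ := exists_dotProduct_mulVec_eq_sum_perm hS f g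
  calc f ⬝ᵥ (S *ᵥ g) ≤ ∑ σ, w σ * f ⬝ᵥ g :=
        hS ▸ sum_le_sum fun σ _ => mul_le_mul_of_nonneg_left h.sum_mul_comp_perm_le_sum_mul (hw0 σ)
    _ = f ⬝ᵥ g := by rw [← sum_mul, hw1, one_mul]

lemma _root_.Antivary.dotProduct_le_dotProduct_mulVec (hS : S ∈ doublyStochastic R ι)
    (h : Antivary f g) : f ⬝ᵥ g ≤ f ⬝ᵥ (S *ᵥ g) := by
  obtain ⟨w, hw0, hw1, hS⟩ := exists_dotProduct_mulVec_eq_sum_perm hS f g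
  calc f ⬝ᵥ g = ∑ σ, w σ * f ⬝ᵥ g := by rw [← sum_mul, hw1, one_mul]
    _ ≤ f ⬝ᵥ (S *ᵥ g) :=
        hS ▸ sum_le_sum fun σ _ => mul_le_mul_of_nonneg_left h.sum_mul_le_sum_mul_comp_perm (hw0 σ)

end Rearrangement

variable {n 𝕜 : Type*} [Fintype n]

lemma trace_conj_mul_conj {R : Type*} [CommSemiring R] [StarRing R] (U V X Y : Matrix n n R) :
    (U * X * star U * (V * Y * star V)).trace =
      (X * (star U * V) * Y * star (star U * V)).trace := by
  rw [star_mul, star_star]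
  simp only [← Matrix.mul_assoc]
  rw [trace_mul_comm _ U]
  simp only [Matrix.mul_assoc]

variable [DecidableEq n] [RCLike 𝕜]

lemma normSq_mem_doublyStochastic_of_mem_unitaryGroup {U : Matrix n n 𝕜}
    (hU : U ∈ unitaryGroup n 𝕜) : of (fun i j => ‖U i j‖ ^ 2) ∈ doublyStochastic ℝ n := by
  have hrow i : ∑ j, ‖U i j‖ ^ 2 = 1 := by
    have := congrFun₂ (mem_unitaryGroup_iff.mp hU) i i
    simp only [mul_apply, star_apply, RCLike.star_def, RCLike.mul_conj, one_apply_eq] at this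
    exact_mod_cast this
  have hcol j : ∑ i, ‖U i j‖ ^ 2 = 1 := by
    have := congrFun₂ (mem_unitaryGroup_iff'.mp hU) j j
    simp only [mul_apply, star_apply, RCLike.star_def, mul_comm (starRingEnd 𝕜 _), RCLike.mul_conj,
      one_apply_eq] at this
    exact_mod_cast this
  exact mem_doublyStochastic_iff_sum.mpr ⟨fun _ _ => sq_nonneg _, hrow, hcol⟩

lemma re_trace_diagonal_mul_mul_diagonal_mul_star (a b : n → ℝ) (W : Matrix n n 𝕜) :
    RCLike.re (diagonal (RCLike.ofReal ∘ a) * W * diagonal (RCLike.ofReal ∘ b) * star W).trace =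
      a ⬝ᵥ (of (fun i j => ‖W i j‖ ^ 2) *ᵥ b) := by
  simp only [trace, diag, mul_apply (M := _ * diagonal _), map_sum, dotProduct, mulVec, of_apply,
    mul_sum]
  refine sum_congr rfl fun i _ => sum_congr rfl fun j _ => ?_
  simp only [mul_diagonal, diagonal_mul, star_apply, RCLike.star_def, Function.comp_apply]
  rw [← RCLike.ofReal_re (K := 𝕜) (a i * _)]
  congr 1
  push_cast
  rw [← RCLike.mul_conj]
  ring

lemma IsHermitian.re_trace_mul_eq_dotProduct_mulVec {A B : Matrix n n 𝕜}
    (hA : A.IsHermitian) (hB : B.IsHermitian) :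
    RCLike.re (A * B).trace = hA.eigenvalues ⬝ᵥ (of (fun i j =>
      ‖(star (hA.eigenvectorUnitary : Matrix n n 𝕜) * hB.eigenvectorUnitary) i j‖ ^ 2) *ᵥ
        hB.eigenvalues) := by
  conv_lhs => rw [hA.spectral_theorem, hB.spectral_theorem]
  rw [Unitary.conjStarAlgAut_apply, Unitary.conjStarAlgAut_apply, trace_conj_mul_conj,
    re_trace_diagonal_mul_mul_diagonal_mul_star]

lemma IsHermitian.exists_mem_doublyStochastic_re_trace_mul_eq {A B : Matrix n n 𝕜}
    (hA : A.IsHermitian) (hB : B.IsHermitian) (σ τ : Equiv.Perm n) :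
    ∃ S ∈ doublyStochastic ℝ n,
      RCLike.re (A * B).trace = (hA.eigenvalues ∘ σ) ⬝ᵥ (S *ᵥ (hB.eigenvalues ∘ τ)) := by
  have hW :
      star (hA.eigenvectorUnitary : Matrix n n 𝕜) * hB.eigenvectorUnitary ∈ unitaryGroup n 𝕜 :=
    Submonoid.mul_mem _ (Unitary.star_mem hA.eigenvectorUnitary.prop) hB.eigenvectorUnitary.prop
  refine ⟨_, submatrix_mem_doublyStochastic (normSq_mem_doublyStochastic_of_mem_unitaryGroup hW)
    σ τ, ?_⟩
  simp only [submatrix_mulVec_equiv, Function.comp_assoc, Equiv.self_comp_symm, Function.comp_id,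
    comp_equiv_dotProduct_comp_equiv]
  exact hA.re_trace_mul_eq_dotProduct_mulVec hB

end Matrix

open Matrix

/-- Trace inequality for Hermitian matrices (von Neumann / Richter):
if `γ` lists the eigenvalues of `A` in decreasing order and `δ` those of `B`,
then `∑ γ_i δ_{n+1-i} ≤ tr(AB) ≤ ∑ γ_i δ_i`. -/
theorem stmt_0 (n : ℕ) (A B : Matrix (Fin n) (Fin n) ℂ)
    (hA : A.IsHermitian) (hB : B.IsHermitian)
    (γ δ : Fin n → ℝ)
    (hγanti : ∀ i j : Fin n, i ≤ j → γ j ≤ γ i)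
    (hδanti : ∀ i j : Fin n, i ≤ j → δ j ≤ δ i)
    (hγ : ∃ σ : Equiv.Perm (Fin n), ∀ i, γ i = hA.eigenvalues (σ i))
    (hδ : ∃ σ : Equiv.Perm (Fin n), ∀ i, δ i = hB.eigenvalues (σ i)) :
    (∑ i : Fin n, γ i * δ i.rev) ≤ ((A * B).trace).re ∧
      ((A * B).trace).re ≤ ∑ i : Fin n, γ i * δ i := by
  obtain ⟨σ, rfl⟩ : ∃ σ : Equiv.Perm (Fin n), γ = hA.eigenvalues ∘ σ := hγ.imp fun _ => funext
  obtain ⟨τ, rfl⟩ : ∃ τ : Equiv.Perm (Fin n), δ = hB.eigenvalues ∘ τ := hδ.imp fun _ => funext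
  have hγ_anti : Antitone (hA.eigenvalues ∘ σ) := fun i j => hγanti i j
  have hδ_anti : Antitone (hB.eigenvalues ∘ τ) := fun i j => hδanti i j
  rw [← RCLike.re_to_complex]
  constructor
  · obtain ⟨S, hS, htr⟩ :=
      hA.exists_mem_doublyStochastic_re_trace_mul_eq hB σ (Fin.revPerm.trans τ)
    rw [htr]
    exact (hγ_anti.antivary (hδ_anti.comp Fin.rev_anti)).dotProduct_le_dotProduct_mulVec hS
  · obtain ⟨S, hS, htr⟩ := hA.exists_mem_doublyStochastic_re_trace_mul_eq hB σ τ
    rw [htr]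
    exact (hγ_anti.monovary hδ_anti).dotProduct_mulVec_le hS
end

section
/- Let v be a real-valued C² function on an open set of ℂ^n ≅ ℝ^{2n} whose complex Hessian (∂²v/∂z_i∂z̄_j) is positive semidefinite at a point x where also the real Hessian D²v(x) is positive semidefinite. Then det(D²v)(x) ≤ 2^{2n} (det(∂²v/∂z_i∂z̄_j)(x))², where D²v is the real 2n×2n Hessian. -/
/-!
With `J` the standard symplectic matrix, `K = Jᵀ H J` is positive semidefinite with
`det K = det H`, and `H + K` has the block form `[[S, -T], [T, S]]` with `S - iT = 4 C`, so that
`det (H + K) = |det (S - iT)|² = 16ⁿ (det C)²`. On the other hand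
`det (H + K)² ≥ 4^{2n} det H det K`: conjugating by `H^{-1/2}` reduces this to `H = 1`, where it is
`(1 + λ)² ≥ 4λ` for each eigenvalue `λ` of `K`. Hence `2^{2n} det H ≤ 16ⁿ (det C)²`.
-/

open Matrix

namespace Matrix

variable {m ι : Type*} [Fintype m] [DecidableEq m] [Fintype ι] [DecidableEq ι]

lemma IsHermitian.det_one_add {N : Matrix m m ℝ} (hN : N.IsHermitian) :
    (1 + N).det = ∏ i, (1 + hN.eigenvalues i) := by
  have h : 1 + N = cfc (fun x : ℝ => 1 + x) N := by
    rw [cfc_add .., cfc_const_one .., cfc_id' ..]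
  rw [h, hN.cfc_eq]
  simp [IsHermitian.cfc, -Unitary.conjStarAlgAut_apply]

lemma PosSemidef.four_pow_mul_det_le_det_one_add_sq {N : Matrix m m ℝ} (hN : N.PosSemidef) :
    4 ^ Fintype.card m * N.det ≤ (1 + N).det ^ 2 := by
  rw [hN.isHermitian.det_one_add, hN.isHermitian.det_eq_prod_eigenvalues, ← Finset.prod_pow,
    ← Finset.card_univ, ← Finset.prod_const, ← Finset.prod_mul_distrib]
  refine Finset.prod_le_prod (fun i _ => ?_) fun i _ => ?_
  · have := hN.eigenvalues_nonneg i
    simp only [RCLike.ofReal_real_eq_id, id]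
    positivity
  · simp only [RCLike.ofReal_real_eq_id, id]
    nlinarith [sq_nonneg (1 - hN.isHermitian.eigenvalues i)]

open scoped MatrixOrder in
lemma PosSemidef.four_pow_mul_det_mul_det_le_det_add_sq {H K : Matrix m m ℝ}
    (hH : H.PosSemidef) (hK : K.PosSemidef) :
    4 ^ Fintype.card m * (H.det * K.det) ≤ (H + K).det ^ 2 := by
  by_cases hdet : H.det = 0
  · simp [hdet, sq_nonneg]
  set R := CFC.sqrt H
  have hRR : R * R = H := CFC.sqrt_mul_sqrt_self H hH.nonneg
  have hR : Rᴴ = R := (CFC.sqrt_nonneg H).posSemidef.isHermitian.eq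
  have hRdet : IsUnit R.det :=
    isUnit_iff_ne_zero.mpr fun h => hdet (by rw [← hRR, det_mul, h, zero_mul])
  set N := R⁻¹ * K * R⁻¹
  have hN : N.PosSemidef := by
    have := hK.mul_mul_conjTranspose_same R⁻¹
    rwa [conjTranspose_nonsing_inv, hR] at this
  have hK' : K = R * N * R := by
    simp only [N, ← Matrix.mul_assoc, mul_nonsing_inv _ hRdet, Matrix.one_mul]
    rw [Matrix.mul_assoc, nonsing_inv_mul _ hRdet, Matrix.mul_one]
  have hHK : H + K = R * (1 + N) * R := by
    rw [Matrix.mul_add, Matrix.add_mul, Matrix.mul_one, hRR, ← hK']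
  have hHdet : H.det = R.det ^ 2 := by rw [← hRR, det_mul, sq]
  calc 4 ^ Fintype.card m * (H.det * K.det)
      = R.det ^ 4 * (4 ^ Fintype.card m * N.det) := by
        rw [hK', det_mul, det_mul, hHdet]; ring
    _ ≤ R.det ^ 4 * (1 + N).det ^ 2 := by
        gcongr
        exact hN.four_pow_mul_det_le_det_one_add_sq
    _ = (H + K).det ^ 2 := by rw [hHK, det_mul, det_mul]; ring

lemma PosSemidef.two_pow_mul_det_le_det_add {H K : Matrix m m ℝ}
    (hH : H.PosSemidef) (hK : K.PosSemidef) (hdet : K.det = H.det) :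
    2 ^ Fintype.card m * H.det ≤ (H + K).det := by
  refine le_of_sq_le_sq ?_ (hH.add hK).det_nonneg
  calc (2 ^ Fintype.card m * H.det) ^ 2 = 4 ^ Fintype.card m * (H.det * K.det) := by
        rw [hdet, mul_pow, ← pow_mul, mul_comm (Fintype.card m), pow_mul]; norm_num; ring
    _ ≤ (H + K).det ^ 2 := hH.four_pow_mul_det_mul_det_le_det_add_sq hK

lemma det_fromBlocks_eq_det_sub_mul_det_add {R : Type*} [CommRing R] (i : R) (hi : i * i = -1)
    (S T : Matrix ι ι R) :
    (fromBlocks S (-T) T S).det = (S - i • T).det * (S + i • T).det := by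
  have h : fromBlocks 1 0 (-i • 1) 1 * fromBlocks S (-T) T S * fromBlocks 1 0 (i • 1) 1
      = fromBlocks (S - i • T) (-T) 0 (S + i • T) := by
    simp only [fromBlocks_multiply]
    congr 1 <;> simp [smul_smul, hi, sub_eq_add_neg]
    abel
  have := congrArg det h
  rwa [det_mul, det_mul, det_fromBlocks_zero₁₂, det_fromBlocks_zero₁₂, det_fromBlocks_zero₂₁,
    det_one, one_mul, one_mul, mul_one] at this

/-- With `z_j = x_j + i y_j` and `H` the real Hessian of `v` in the coordinates
`inl j ↦ x_j`, `inr j ↦ y_j`, this is the complex Hessian `∂²v/∂z_i∂z̄_j`. -/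
noncomputable def complexHessian (H : Matrix (ι ⊕ ι) (ι ⊕ ι) ℝ) : Matrix ι ι ℂ :=
  of fun i j => (1 / 4 : ℂ) *
    (((H (.inl i) (.inl j) + H (.inr i) (.inr j) : ℝ) : ℂ) +
      Complex.I * ((H (.inl i) (.inr j) - H (.inr i) (.inl j) : ℝ) : ℂ))

lemma add_conjTranspose_J_mul_mul_J (H : Matrix (ι ⊕ ι) (ι ⊕ ι) ℝ) :
    H + (J ι ℝ)ᴴ * H * J ι ℝ =
      fromBlocks (H.toBlocks₁₁ + H.toBlocks₂₂) (-(H.toBlocks₂₁ - H.toBlocks₁₂))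
        (H.toBlocks₂₁ - H.toBlocks₁₂) (H.toBlocks₁₁ + H.toBlocks₂₂) := by
  conv_lhs => rw [← fromBlocks_toBlocks H]
  rw [J, fromBlocks_conjTranspose, fromBlocks_multiply, fromBlocks_multiply, fromBlocks_add]
  simp [sub_eq_add_neg, add_comm]

lemma det_conjTranspose_J_mul_mul_J (H : Matrix (ι ⊕ ι) (ι ⊕ ι) ℝ) :
    ((J ι ℝ)ᴴ * H * J ι ℝ).det = H.det := by
  rw [det_mul, det_mul, det_conjTranspose, star_trivial, mul_comm, ← mul_assoc,
    J_det_mul_J_det, one_mul]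

lemma det_add_conjTranspose_J_mul_mul_J (H : Matrix (ι ⊕ ι) (ι ⊕ ι) ℝ) :
    (H + (J ι ℝ)ᴴ * H * J ι ℝ).det =
      16 ^ Fintype.card ι * Complex.normSq H.complexHessian.det := by
  apply Complex.ofReal_injective
  set S := H.toBlocks₁₁ + H.toBlocks₂₂
  set T := H.toBlocks₂₁ - H.toBlocks₁₂
  have hminus : S.map Complex.ofRealHom - Complex.I • T.map Complex.ofRealHom =
      (4 : ℂ) • H.complexHessian := by
    ext i j
    simp [S, T, complexHessian, toBlocks₁₁, toBlocks₁₂, toBlocks₂₁, toBlocks₂₂]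
    ring
  have hplus : S.map Complex.ofRealHom + Complex.I • T.map Complex.ofRealHom =
      ((4 : ℂ) • H.complexHessian).map (starRingEnd ℂ) := by
    ext i j
    simp [S, T, complexHessian, toBlocks₁₁, toBlocks₁₂, toBlocks₂₁, toBlocks₂₂]
    ring
  change Complex.ofRealHom _ = Complex.ofRealHom _
  rw [RingHom.map_det, RingHom.mapMatrix_apply, add_conjTranspose_J_mul_mul_J, fromBlocks_map,
    Matrix.map_neg _ (map_neg Complex.ofRealHom),
    det_fromBlocks_eq_det_sub_mul_det_add Complex.I Complex.I_mul_I,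
    hminus, hplus, ← RingHom.mapMatrix_apply, ← RingHom.map_det, det_smul, map_mul, map_pow,
    mul_mul_mul_comm, Complex.mul_conj, map_ofNat, ← mul_pow]
  norm_num

end Matrix

open ComplexOrder

theorem stmt_10_general (n : ℕ)
    (H : Matrix (Fin n ⊕ Fin n) (Fin n ⊕ Fin n) ℝ)
    (C : Matrix (Fin n) (Fin n) ℂ)
    (hC : ∀ i j : Fin n,
      C i j = (1 / 4 : ℂ) *
        (((H (Sum.inl i) (Sum.inl j) + H (Sum.inr i) (Sum.inr j) : ℝ) : ℂ)
          + Complex.I * ((H (Sum.inl i) (Sum.inr j) - H (Sum.inr i) (Sum.inl j) : ℝ) : ℂ)))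
    (hHpsd : H.PosSemidef) (hCpsd : C.PosSemidef) :
    H.det ≤ 2 ^ (2 * n) * (C.det.re) ^ 2 := by
  have hCH : C = H.complexHessian := Matrix.ext hC
  have hdet_im : C.det.im = 0 := by
    rw [← Complex.conj_eq_iff_im, ← Complex.star_def, ← det_conjTranspose, hCpsd.isHermitian.eq]
  have key := hHpsd.two_pow_mul_det_le_det_add (hHpsd.conjTranspose_mul_mul_same (J (Fin n) ℝ))
    (det_conjTranspose_J_mul_mul_J H)
  rw [det_add_conjTranspose_J_mul_mul_J, ← hCH, Complex.normSq_apply, hdet_im,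
    Fintype.card_sum, Fintype.card_fin, ← two_mul] at key
  have h16 : (16 : ℝ) ^ n = 2 ^ (2 * n) * 2 ^ (2 * n) := by
    rw [← mul_pow, pow_mul]; norm_num
  rw [h16] at key
  refine le_of_mul_le_mul_left ?_ (by positivity : (0 : ℝ) < 2 ^ (2 * n))
  linarith

/-- Błocki's inequality: if `v` is `C²` on `ℝ^{2n} ≅ ℂ^n` (real coordinates indexed by
`Fin n ⊕ Fin n`, `x`-parts and `y`-parts), `H` is its real Hessian at a point `x`,
`C` its complex Hessian (`C_{ij} = (1/4)(v_{x_i x_j} + v_{y_i y_j} + i(v_{x_i y_j} − v_{y_i x_j}))`),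
and both `H` and `C` are positive semidefinite, then `det H ≤ 2^{2n} (det C)²`. -/
theorem stmt_10 (n : ℕ) (hn : 1 ≤ n)
    (v : ((Fin n ⊕ Fin n) → ℝ) → ℝ) (x : (Fin n ⊕ Fin n) → ℝ)
    (hv : ContDiffAt ℝ 2 v x)
    (H : Matrix (Fin n ⊕ Fin n) (Fin n ⊕ Fin n) ℝ)
    (hH : ∀ α β : Fin n ⊕ Fin n,
      H α β = iteratedFDeriv ℝ 2 v x ![Pi.single α 1, Pi.single β 1])
    (C : Matrix (Fin n) (Fin n) ℂ)
    (hC : ∀ i j : Fin n,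
      C i j = (1 / 4 : ℂ) *
        (((H (Sum.inl i) (Sum.inl j) + H (Sum.inr i) (Sum.inr j) : ℝ) : ℂ)
          + Complex.I * ((H (Sum.inl i) (Sum.inr j) - H (Sum.inr i) (Sum.inl j) : ℝ) : ℂ)))
    (hHpsd : H.PosSemidef) (hCpsd : C.PosSemidef) :
    H.det ≤ 2 ^ (2 * n) * (C.det.re) ^ 2 :=
  stmt_10_general n H C hC hHpsd hCpsd
end

section
/- Let Γ ⊂ ℝ^m be an open symmetric convex cone with vertex at the origin containing the positive orthant Γ_m, and with Γ ≠ ℝ^m. Then Γ is contained in the half-space Γ_1 = {λ ∈ ℝ^m : ∑_{j=1}^m λ_j > 0}. -/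
/-!
If some `λ ∈ Γ` had `∑ λⱼ ≤ 0`, averaging its cyclic shifts (convexity and symmetry) would put
the constant vector with value `(∑ λⱼ)/m ≤ 0` in `Γ`; openness then gives a strictly negative
constant vector in `Γ`, and by scaling `-t·𝟙 ∈ Γ` for every `t > 0`. Every `x` is then
`(x + t·𝟙) + (-t·𝟙)` with `x + t·𝟙 ∈ Γ_m` for large `t`, so `Γ = ℝ^m`.
-/

open Finset

theorem add_mem_of_convex_of_smul_mem {E : Type*} [AddCommGroup E] [Module ℝ E] {Γ : Set E}
    (hconv : Convex ℝ Γ) (hcone : ∀ x ∈ Γ, ∀ t : ℝ, 0 < t → t • x ∈ Γ)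
    {x y : E} (hx : x ∈ Γ) (hy : y ∈ Γ) : x + y ∈ Γ := by
  have hmid : (1 / 2 : ℝ) • x + (1 / 2 : ℝ) • y ∈ Γ :=
    hconv hx hy (by norm_num) (by norm_num) (by norm_num)
  convert hcone _ hmid 2 two_pos using 1
  rw [smul_add, smul_smul, smul_smul]
  norm_num

theorem Convex.const_average_mem_of_addLeft_invariant {G : Type*} [AddGroup G] [Fintype G]
    {Γ : Set (G → ℝ)} (hconv : Convex ℝ Γ)
    (hshift : ∀ k : G, ∀ lam ∈ Γ, lam ∘ Equiv.addLeft k ∈ Γ) {lam : G → ℝ} (hlam : lam ∈ Γ) :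
    (fun _ => (∑ j, lam j) / Fintype.card G) ∈ Γ := by
  have hcard : (0 : ℝ) < Fintype.card G := by exact_mod_cast Fintype.card_pos
  have hmean := hconv.sum_mem (t := univ) (w := fun _ => (1 : ℝ) / Fintype.card G)
    (z := fun k => lam ∘ Equiv.addLeft k) (fun _ _ => by positivity)
    (by rw [sum_const, card_univ, nsmul_eq_mul]; field_simp) (fun k _ => hshift k lam hlam)
  convert hmean using 1
  funext j
  have hreindex : ∑ k : G, lam (k + j) = ∑ k : G, lam k :=
    Fintype.sum_equiv (Equiv.addRight j) _ _ fun _ => rfl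
  simp only [Finset.sum_apply, Pi.smul_apply, Function.comp_apply, Equiv.coe_addLeft, smul_eq_mul,
    ← mul_sum, hreindex]
  ring

theorem exists_lt_const_mem_of_isOpen {ι : Type*} {Γ : Set (ι → ℝ)}
    (hopen : IsOpen Γ) {a : ℝ} (ha : (fun _ => a) ∈ Γ) : ∃ c < a, (fun _ => c) ∈ Γ := by
  have hnhds : (fun t : ℝ => fun _ : ι => t) ⁻¹' Γ ∈ nhds a :=
    (hopen.preimage (continuous_pi fun _ => continuous_id)).mem_nhds ha
  obtain ⟨l, hl, hIoc⟩ := exists_Ioc_subset_of_mem_nhds hnhds ⟨a - 1, by linarith⟩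
  exact ⟨(l + a) / 2, by linarith, hIoc ⟨by linarith, by linarith⟩⟩

theorem eq_univ_of_const_neg_mem {ι : Type*} [Fintype ι] {Γ : Set (ι → ℝ)}
    (hadd : ∀ x ∈ Γ, ∀ y ∈ Γ, x + y ∈ Γ) (hcone : ∀ x ∈ Γ, ∀ t : ℝ, 0 < t → t • x ∈ Γ)
    (hsub : {x : ι → ℝ | ∀ j, 0 < x j} ⊆ Γ) {c : ℝ} (hc : c < 0) (hcΓ : (fun _ => c) ∈ Γ) :
    Γ = Set.univ := by
  refine Set.eq_univ_of_forall fun x => ?_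
  set t := ∑ j, |x j| + 1
  have ht : ∀ j, |x j| < t := fun j => by
    have := single_le_sum (fun i _ => abs_nonneg (x i)) (mem_univ j)
    linarith
  have hshifted : x + (fun _ => t) ∈ Γ := hsub fun j => by
    have := neg_abs_le (x j)
    simp only [Pi.add_apply]
    linarith [ht j]
  have hneg : (fun _ => -t) ∈ Γ := by
    have ht0 : 0 < t := by positivity
    convert hcone _ hcΓ (t / -c) (div_pos ht0 (neg_pos.mpr hc)) using 1
    funext
    simp only [Pi.smul_apply, smul_eq_mul]
    rw [div_neg, neg_mul, div_mul_cancel₀ _ hc.ne]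
  convert hadd _ hshifted _ hneg using 1
  funext
  simp

/-- An open symmetric convex cone `Γ ⊊ ℝ^m` with vertex at the origin containing the
positive orthant `Γ_m` is contained in the half-space
`Γ_1 = {λ : ∑_j λ_j > 0}`. -/
theorem stmt_11 (m : ℕ) (hm : 1 ≤ m)
    (Γ : Set (Fin m → ℝ))
    (hopen : IsOpen Γ)
    (hcone : ∀ lam ∈ Γ, ∀ t : ℝ, 0 < t → t • lam ∈ Γ)
    (hconvex : Convex ℝ Γ)
    (hsymm : ∀ σ : Equiv.Perm (Fin m), ∀ lam ∈ Γ, (lam ∘ σ) ∈ Γ)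
    (hsub : {lam : Fin m → ℝ | ∀ j, 0 < lam j} ⊆ Γ)
    (hproper : Γ ≠ Set.univ) :
    Γ ⊆ {lam : Fin m → ℝ | 0 < ∑ j, lam j} := by
  have : NeZero m := ⟨by omega⟩
  intro lam hlam
  by_contra hsum
  have hmean_nonpos : (∑ j, lam j) / Fintype.card (Fin m) ≤ 0 :=
    div_nonpos_of_nonpos_of_nonneg (not_lt.mp hsum) (Nat.cast_nonneg _)
  have hmean := hconvex.const_average_mem_of_addLeft_invariant
    (fun k => hsymm (Equiv.addLeft k)) hlam
  obtain ⟨c, hc, hcΓ⟩ := exists_lt_const_mem_of_isOpen hopen hmean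
  exact hproper <| eq_univ_of_const_neg_mem
    (fun _ hx _ hy => add_mem_of_convex_of_smul_mem hconvex hcone hx hy) hcone hsub
    (hc.trans_le hmean_nonpos) hcΓ
end

section
/- Let f be a smooth symmetric concave function on an open symmetric cone Γ ⊂ ℝ^m with ∂f/∂λ_j > 0 on Γ for all j, and suppose that for every λ ∈ Γ and every σ < sup_Γ f one has lim_{t→+∞} f(tλ) > σ. Then for all λ ∈ Γ, ∑_{i=1}^m f_i(λ) λ_i ≥ 0, where f_i = ∂f/∂λ_i. -/
/-- For a smooth symmetric concave function `f` on an open symmetric cone `Γ` with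
positive partial derivatives, satisfying `lim_{t→∞} f(tλ) > σ` for all `σ < sup_Γ f`
and `λ ∈ Γ`, one has `∑_i f_i(λ) λ_i ≥ 0` on `Γ`. -/
theorem stmt_12 (m : ℕ) (hm : 1 ≤ m)
    (Γ : Set (Fin m → ℝ))
    (hopen : IsOpen Γ)
    (hcone : ∀ lam ∈ Γ, ∀ t : ℝ, 0 < t → t • lam ∈ Γ)
    (hsymmset : ∀ σ : Equiv.Perm (Fin m), ∀ lam ∈ Γ, (lam ∘ σ) ∈ Γ)
    (f : (Fin m → ℝ) → ℝ)
    (hsmooth : ContDiffOn ℝ (⊤ : ℕ∞) f Γ)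
    (hconc : ConcaveOn ℝ Γ f)
    (hsymm : ∀ σ : Equiv.Perm (Fin m), ∀ lam ∈ Γ, f (lam ∘ σ) = f lam)
    (hpos : ∀ lam ∈ Γ, ∀ j : Fin m, 0 < fderiv ℝ f lam (Pi.single j 1))
    (hgrow : ∀ s : ℝ, (∃ μ ∈ Γ, s < f μ) →
      ∀ lam ∈ Γ, ∀ᶠ t : ℝ in Filter.atTop, s < f (t • lam)) :
    ∀ lam ∈ Γ, 0 ≤ ∑ i, fderiv ℝ f lam (Pi.single i 1) * lam i := by
  intro lam hlam
  set D := fderiv ℝ f lam with hD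
  -- the sum equals D lam
  have hsum : ∑ i, D (Pi.single i 1) * lam i = D lam := by
    conv_rhs => rw [pi_eq_sum_univ lam]
    rw [map_sum]
    refine Finset.sum_congr rfl fun i _ => ?_
    rw [map_smul, smul_eq_mul, mul_comm]
    congr 2
    funext j
    simp [Pi.single_apply, eq_comm]
  rw [hsum]
  by_contra hneg
  push_neg at hneg
  set S := D lam with hS
  -- f is differentiable at lam
  have hdiff : DifferentiableAt ℝ f lam :=
    (hsmooth.contDiffAt (hopen.mem_nhds hlam)).differentiableAt (by simp)
  -- the ray function
  set φ : ℝ → ℝ := fun t => f (t • lam) with hφ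
  have hφderiv : HasDerivAt φ S 1 := by
    have hg : HasDerivAt (fun t : ℝ => t • lam) lam 1 := by
      simpa using (hasDerivAt_id (1 : ℝ)).smul_const lam
    have hF : HasFDerivAt f D ((1 : ℝ) • lam) := by
      rw [one_smul]; exact hdiff.hasFDerivAt
    exact hF.comp_hasDerivAt 1 hg
  -- φ is concave on Ioi 0
  have hφconc : ConcaveOn ℝ (Set.Ioi (0 : ℝ)) φ := by
    refine ⟨convex_Ioi 0, fun s hs t ht a b ha hb hab => ?_⟩
    have hsΓ : s • lam ∈ Γ := hcone lam hlam s hs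
    have htΓ : t • lam ∈ Γ := hcone lam hlam t ht
    have := hconc.2 hsΓ htΓ ha hb hab
    simp only [hφ, smul_eq_mul]
    have hrw : (a * s + b * t) • lam = a • (s • lam) + b • (t • lam) := by
      rw [add_smul, smul_smul, smul_smul]
    rw [hrw]
    simpa [smul_eq_mul] using this
  -- growth
  have hgr := hgrow (f lam - 1) ⟨lam, hlam, by linarith⟩ lam hlam
  have hbig : ∀ᶠ t : ℝ in Filter.atTop, (1 : ℝ) - 2 / S ≤ t := Filter.eventually_ge_atTop _
  obtain ⟨t, ht1, ht2⟩ := (hgr.and hbig).exists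
  have hS2 : (2 : ℝ) / S < 0 := div_neg_of_pos_of_neg (by norm_num) hneg
  have ht : 1 < t := by linarith
  have hslope := hφconc.slope_le_of_hasDerivAt (Set.mem_Ioi.mpr one_pos)
    (Set.mem_Ioi.mpr (by linarith : (0:ℝ) < t)) ht hφderiv
  rw [slope_def_field] at hslope
  have htm : 0 < t - 1 := by linarith
  have hle : φ t ≤ φ 1 + S * (t - 1) := by
    have := (div_le_iff₀ htm).mp (by simpa [div_eq_iff htm.ne'] using hslope)
    linarith
  have hSne : S ≠ 0 := ne_of_lt hneg
  have hbound : S * (t - 1) ≤ -2 := by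
    have hnd : -2 / S = -(2 / S) := by ring
    have h1 : -2 / S ≤ t - 1 := by rw [hnd]; linarith
    calc S * (t - 1) ≤ S * (-2 / S) := by
          exact mul_le_mul_of_nonpos_left h1 (le_of_lt hneg)
      _ = -2 := by field_simp [hSne]
  have hφ1 : φ 1 = f lam := by simp [hφ]
  have : φ t ≤ f lam - 2 := by rw [hφ1] at hle; linarith
  have : f lam - 1 < φ t := ht1
  linarith
end

section
/- Let f be a smooth symmetric concave function on an open symmetric set Γ ⊂ ℝ^m with all partial derivatives f_i = ∂f/∂λ_i positive. If λ ∈ Γ with λ_i ≤ λ_j for some indices i, j, then f_i(λ) ≥ f_j(λ). In particular, if λ_1 ≥ λ_2 ≥ ⋯ ≥ λ_m then f_1(λ) ≤ f_2(λ) ≤ ⋯ ≤ f_m(λ). -/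
lemma swap_single_aux (m : ℕ) (i j : Fin m) :
    (Pi.single i (1:ℝ)) ∘ (Equiv.swap i j) = Pi.single j 1 := by
  funext k
  simp only [Function.comp_apply, Pi.single_apply, Equiv.swap_apply_def]
  split_ifs <;> simp_all

lemma swap_fixed_aux (m : ℕ) (i j : Fin m) (lam : Fin m → ℝ) (h : lam i = lam j) :
    lam ∘ (Equiv.swap i j) = lam := by
  funext k
  simp only [Function.comp_apply, Equiv.swap_apply_def]
  split_ifs <;> simp_all

lemma swap_sub_aux (m : ℕ) (i j : Fin m) (lam : Fin m → ℝ) :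
    lam ∘ (Equiv.swap i j) - lam
      = (lam j - lam i) • (Pi.single i 1 : Fin m → ℝ)
        + (lam i - lam j) • (Pi.single j 1 : Fin m → ℝ) := by
  funext k
  simp only [Pi.sub_apply, Pi.add_apply, Pi.smul_apply, Function.comp_apply,
    Pi.single_apply, Equiv.swap_apply_def, smul_eq_mul]
  split_ifs <;> simp_all

/-- For a smooth symmetric concave function `f` on an open symmetric set `Γ` with
positive partial derivatives: if `λ_i ≤ λ_j` then `f_i(λ) ≥ f_j(λ)`; in particular
if `λ` is nonincreasing then the partial derivatives are nondecreasing. -/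
theorem stmt_14 (m : ℕ)
    (Γ : Set (Fin m → ℝ))
    (hopen : IsOpen Γ)
    (hsymmset : ∀ σ : Equiv.Perm (Fin m), ∀ lam ∈ Γ, (lam ∘ σ) ∈ Γ)
    (f : (Fin m → ℝ) → ℝ)
    (hsmooth : ContDiffOn ℝ (⊤ : ℕ∞) f Γ)
    (hconc : ConcaveOn ℝ Γ f)
    (hsymm : ∀ σ : Equiv.Perm (Fin m), ∀ lam ∈ Γ, f (lam ∘ σ) = f lam)
    (hpos : ∀ lam ∈ Γ, ∀ j : Fin m, 0 < fderiv ℝ f lam (Pi.single j 1)) :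
    (∀ lam ∈ Γ, ∀ i j : Fin m, lam i ≤ lam j →
        fderiv ℝ f lam (Pi.single j 1) ≤ fderiv ℝ f lam (Pi.single i 1)) ∧
      (∀ lam ∈ Γ, (∀ i j : Fin m, i ≤ j → lam j ≤ lam i) →
        ∀ i j : Fin m, i ≤ j →
          fderiv ℝ f lam (Pi.single i 1) ≤ fderiv ℝ f lam (Pi.single j 1)) := by
  have hdiff : ∀ lam ∈ Γ, DifferentiableAt ℝ f lam := fun lam hl =>
    (hsmooth.contDiffAt (hopen.mem_nhds hl)).differentiableAt (by simp)
  -- equality case via the symmetry of `f`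
  have key_eq : ∀ lam ∈ Γ, ∀ i j : Fin m, lam i = lam j →
      fderiv ℝ f lam (Pi.single j 1) = fderiv ℝ f lam (Pi.single i 1) := by
    intro lam hl i j hij
    set σ : Equiv.Perm (Fin m) := Equiv.swap i j with hσ
    set L : (Fin m → ℝ) →L[ℝ] (Fin m → ℝ) :=
      LinearMap.toContinuousLinearMap (LinearMap.funLeft ℝ ℝ σ) with hLdef
    have hLapp : ∀ x : Fin m → ℝ, L x = x ∘ σ := fun x => rfl
    have hLlam : L lam = lam := by rw [hLapp, hσ]; exact swap_fixed_aux m i j lam hij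
    have heq : (f ∘ L) =ᶠ[nhds lam] f := by
      filter_upwards [hopen.mem_nhds hl] with x hx
      show f (L x) = f x
      rw [hLapp]
      exact hsymm σ x hx
    have hchain : fderiv ℝ (f ∘ L) lam = (fderiv ℝ f (L lam)).comp (fderiv ℝ L lam) := by
      apply fderiv_comp lam _ L.differentiableAt
      rw [hLlam]; exact hdiff lam hl
    rw [L.fderiv] at hchain
    have h1 : fderiv ℝ f lam = (fderiv ℝ f lam).comp L := by
      conv_lhs => rw [← heq.fderiv_eq]
      rw [hchain, hLlam]
    have hsingle : L (Pi.single i 1) = Pi.single j 1 := by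
      rw [hLapp, hσ]; exact swap_single_aux m i j
    calc fderiv ℝ f lam (Pi.single j 1) = fderiv ℝ f lam (L (Pi.single i 1)) := by
          rw [hsingle]
      _ = fderiv ℝ f lam (Pi.single i 1) := by
          conv_rhs => rw [h1]
          rfl
  -- the main inequality
  have key : ∀ lam ∈ Γ, ∀ i j : Fin m, lam i ≤ lam j →
      fderiv ℝ f lam (Pi.single j 1) ≤ fderiv ℝ f lam (Pi.single i 1) := by
    intro lam hl i j hij
    rcases eq_or_lt_of_le hij with heq | hlt
    · exact (key_eq lam hl i j heq).le
    set σ : Equiv.Perm (Fin m) := Equiv.swap i j with hσ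
    set μ : Fin m → ℝ := lam ∘ σ with hμ
    have hμΓ : μ ∈ Γ := hsymmset σ lam hl
    have hfμ : f μ = f lam := hsymm σ lam hl
    -- `lam` is a minimum of `f` on the segment from `lam` to `μ`
    have hmin : IsLocalMinOn f (segment ℝ lam μ) lam := by
      apply IsMinOn.localize
      intro x hx
      rcases hx with ⟨a, b, ha, hb, hab, rfl⟩
      have := hconc.2 hl hμΓ ha hb hab
      simp only [Set.mem_setOf_eq]
      calc f lam = a * f lam + b * f lam := by rw [← add_mul, hab, one_mul]
        _ = a • f lam + b • f μ := by rw [hfμ]; rfl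
        _ ≤ f (a • lam + b • μ) := this
    have hcone : μ - lam ∈ posTangentConeAt (segment ℝ lam μ) lam :=
      sub_mem_posTangentConeAt_of_segment_subset subset_rfl
    have hnn : 0 ≤ fderiv ℝ f lam (μ - lam) :=
      hmin.hasFDerivWithinAt_nonneg ((hdiff lam hl).hasFDerivAt.hasFDerivWithinAt) hcone
    have hsub : μ - lam = (lam j - lam i) • (Pi.single i 1 : Fin m → ℝ)
        + (lam i - lam j) • (Pi.single j 1 : Fin m → ℝ) := by
      rw [hμ, hσ]; exact swap_sub_aux m i j lam
    rw [hsub] at hnn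
    simp only [map_add, map_smul, smul_eq_mul] at hnn
    nlinarith [hnn, sub_pos.mpr hlt]
  refine ⟨key, fun lam hl hmono i j hij => key lam hl j i (hmono i j hij)⟩
end
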